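/- For every α ∈ [0,1], the function log ψ_α is concave on the open square (0,1)²; equivalently, (x,y) ↦ log(sin(πx)) + log(sin(πy)) − α log(sin(πx) + sin(πy)) is a concave function on (0,1)². In particular, the super-level sets of ψ_α are convex. -/
import Mathlib


open Set Real

noncomputable section

/-- The stream function `ψ_α(x,y) = 2^α sin(πx) sin(πy) / (sin(πx) + sin(πy))^α`. -/
def psiα (α : ℝ) : ℝ × ℝ → ℝ := fun p =>
  2 ^ α * (Real.sin (π * p.1) * Real.sin (π * p.2)) /
    (Real.sin (π * p.1) + Real.sin (π * p.2)) ^ α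

private lemma sinpi_pos {x : ℝ} (hx : x ∈ Ioo (0:ℝ) 1) : 0 < Real.sin (π * x) :=
  Real.sin_pos_of_pos_of_lt_pi (mul_pos Real.pi_pos hx.1)
    (by nlinarith [Real.pi_pos, hx.2])

private lemma sinpi_concave {x y a b : ℝ} (hx : x ∈ Ioo (0:ℝ) 1) (hy : y ∈ Ioo (0:ℝ) 1)
    (ha : 0 ≤ a) (hb : 0 ≤ b) (hab : a + b = 1) :
    a * Real.sin (π * x) + b * Real.sin (π * y) ≤ Real.sin (π * (a * x + b * y)) := by
  have h := strictConcaveOn_sin_Icc.concaveOn.2 (x := π * x) (y := π * y)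
    ⟨mul_nonneg Real.pi_pos.le hx.1.le, by nlinarith [Real.pi_pos, hx.2]⟩
    ⟨mul_nonneg Real.pi_pos.le hy.1.le, by nlinarith [Real.pi_pos, hy.2]⟩ ha hb hab
  simp only [smul_eq_mul] at h
  calc a * Real.sin (π * x) + b * Real.sin (π * y) ≤ Real.sin (a * (π * x) + b * (π * y)) := h
    _ = Real.sin (π * (a * x + b * y)) := by ring_nf

private lemma log_concave2 {x y a b : ℝ} (hx : 0 < x) (hy : 0 < y)
    (ha : 0 ≤ a) (hb : 0 ≤ b) (hab : a + b = 1) :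
    a * Real.log x + b * Real.log y ≤ Real.log (a * x + b * y) := by
  have h := strictConcaveOn_log_Ioi.concaveOn.2 hx hy ha hb hab
  simpa only [smul_eq_mul] using h

private lemma comb_pos {a b u1 u2 : ℝ} (ha : 0 ≤ a) (hb : 0 ≤ b) (hab : a + b = 1)
    (hu1 : 0 < u1) (hu2 : 0 < u2) : 0 < a * u1 + b * u2 := by
  rcases eq_or_lt_of_le ha with h | h
  · have hb1 : b = 1 := by linarith
    simp [← h, hb1, hu2]
  · have := mul_nonneg hb hu2.le
    nlinarith

private lemma harm_le {a b u1 v1 u2 v2 U V : ℝ} (ha : 0 ≤ a) (hb : 0 ≤ b) (hab : a + b = 1)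
    (hu1 : 0 < u1) (hv1 : 0 < v1) (hu2 : 0 < u2) (hv2 : 0 < v2)
    (hU : a * u1 + b * u2 ≤ U) (hV : a * v1 + b * v2 ≤ V) :
    a * (u1 * v1 / (u1 + v1)) + b * (u2 * v2 / (u2 + v2)) ≤ U * V / (U + V) := by
  have hSu : 0 < a * u1 + b * u2 := comb_pos ha hb hab hu1 hu2
  have hSv : 0 < a * v1 + b * v2 := comb_pos ha hb hab hv1 hv2
  have hUpos : 0 < U := lt_of_lt_of_le hSu hU
  have hVpos : 0 < V := lt_of_lt_of_le hSv hV
  have step1 : a * (u1 * v1 / (u1 + v1)) + b * (u2 * v2 / (u2 + v2)) ≤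
      (a * u1 + b * u2) * (a * v1 + b * v2) / ((a * u1 + b * u2) + (a * v1 + b * v2)) := by
    rw [← mul_div_assoc, ← mul_div_assoc,
      div_add_div _ _ (by positivity : (u1 + v1) ≠ 0) (by positivity : (u2 + v2) ≠ 0),
      div_le_div_iff₀ (by positivity) (by positivity)]
    nlinarith [mul_nonneg (mul_nonneg ha hb) (sq_nonneg (u1 * v2 - u2 * v1)),
      mul_pos hu1 hv1, mul_pos hu2 hv2, mul_pos hu1 hv2, mul_pos hu2 hv1,
      sq_nonneg (a * (u1 * v2 - u2 * v1)), sq_nonneg (b * (u1 * v2 - u2 * v1))]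
  have step2 : (a * u1 + b * u2) * (a * v1 + b * v2) / ((a * u1 + b * u2) + (a * v1 + b * v2)) ≤
      U * V / (U + V) := by
    rw [div_le_div_iff₀ (by positivity) (by positivity)]
    nlinarith [mul_nonneg (mul_nonneg hSu.le hUpos.le) (sub_nonneg.2 hV),
      mul_nonneg (mul_nonneg hSv.le hVpos.le) (sub_nonneg.2 hU),
      mul_pos hSu hSv, mul_pos hUpos hVpos]
  linarith

private lemma log_harm (u v : ℝ) (hu : 0 < u) (hv : 0 < v) :
    Real.log (u * v / (u + v)) = Real.log u + Real.log v - Real.log (u + v) := by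
  rw [Real.log_div (by positivity) (by positivity), Real.log_mul hu.ne' hv.ne']

set_option maxHeartbeats 1000000 in
theorem log_psiα_concave (α : ℝ) (hα : α ∈ Icc (0:ℝ) 1) :
    ConcaveOn ℝ (Ioo (0:ℝ) 1 ×ˢ Ioo (0:ℝ) 1) (fun p => Real.log (psiα α p)) ∧
    ConcaveOn ℝ (Ioo (0:ℝ) 1 ×ˢ Ioo (0:ℝ) 1) (fun p =>
      Real.log (Real.sin (π * p.1)) + Real.log (Real.sin (π * p.2))
        - α * Real.log (Real.sin (π * p.1) + Real.sin (π * p.2))) ∧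
    ∀ c : ℝ, Convex ℝ {p ∈ Ioo (0:ℝ) 1 ×ˢ Ioo (0:ℝ) 1 | c ≤ psiα α p} := by
  obtain ⟨hα0, hα1⟩ := hα
  set S : Set (ℝ × ℝ) := Ioo (0:ℝ) 1 ×ˢ Ioo (0:ℝ) 1 with hS
  have hSconv : Convex ℝ S := (convex_Ioo (0:ℝ) 1).prod (convex_Ioo (0:ℝ) 1)
  -- the key concavity statement (second bullet)
  have main : ConcaveOn ℝ S (fun p =>
      Real.log (Real.sin (π * p.1)) + Real.log (Real.sin (π * p.2))
        - α * Real.log (Real.sin (π * p.1) + Real.sin (π * p.2))) := by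
    refine ⟨hSconv, fun p hp q hq a b ha hb hab => ?_⟩
    simp only [smul_eq_mul, Prod.fst_add, Prod.snd_add, Prod.smul_fst, Prod.smul_snd,
      smul_eq_mul]
    set u1 := Real.sin (π * p.1) with hu1d
    set v1 := Real.sin (π * p.2) with hv1d
    set u2 := Real.sin (π * q.1) with hu2d
    set v2 := Real.sin (π * q.2) with hv2d
    set um := Real.sin (π * (a * p.1 + b * q.1)) with humd
    set vm := Real.sin (π * (a * p.2 + b * q.2)) with hvmd
    have hu1 : 0 < u1 := sinpi_pos hp.1
    have hv1 : 0 < v1 := sinpi_pos hp.2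
    have hu2 : 0 < u2 := sinpi_pos hq.1
    have hv2 : 0 < v2 := sinpi_pos hq.2
    have hum : a * u1 + b * u2 ≤ um := sinpi_concave hp.1 hq.1 ha hb hab
    have hvm : a * v1 + b * v2 ≤ vm := sinpi_concave hp.2 hq.2 ha hb hab
    have humpos : 0 < um := lt_of_lt_of_le (comb_pos ha hb hab hu1 hu2) hum
    have hvmpos : 0 < vm := lt_of_lt_of_le (comb_pos ha hb hab hv1 hv2) hvm
    -- inequality (I) per coordinate
    have I1 : a * Real.log u1 + b * Real.log u2 ≤ Real.log um :=
      le_trans (log_concave2 hu1 hu2 ha hb hab)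
        (Real.log_le_log (comb_pos ha hb hab hu1 hu2) hum)
    have I2 : a * Real.log v1 + b * Real.log v2 ≤ Real.log vm :=
      le_trans (log_concave2 hv1 hv2 ha hb hab)
        (Real.log_le_log (comb_pos ha hb hab hv1 hv2) hvm)
    -- inequality (II) for the harmonic part
    have II : a * (Real.log u1 + Real.log v1 - Real.log (u1 + v1))
        + b * (Real.log u2 + Real.log v2 - Real.log (u2 + v2))
        ≤ Real.log um + Real.log vm - Real.log (um + vm) := by
      rw [← log_harm u1 v1 hu1 hv1, ← log_harm u2 v2 hu2 hv2, ← log_harm um vm humpos hvmpos]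
      have h1 : 0 < u1 * v1 / (u1 + v1) := by positivity
      have h2 : 0 < u2 * v2 / (u2 + v2) := by positivity
      refine le_trans (log_concave2 h1 h2 ha hb hab) (Real.log_le_log ?_ ?_)
      · exact comb_pos ha hb hab h1 h2
      · exact harm_le ha hb hab hu1 hv1 hu2 hv2 hum hvm
    -- combine: target = (1-α)*(I1+I2) + α*II
    have h1α : 0 ≤ 1 - α := by linarith
    nlinarith [mul_le_mul_of_nonneg_left (add_le_add I1 I2) h1α,
      mul_le_mul_of_nonneg_left II hα0]
  -- equality of log ψ_α with the concave expression plus a constant, on S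
  have heq : ∀ p ∈ S, Real.log (psiα α p) = α * Real.log 2 +
      (Real.log (Real.sin (π * p.1)) + Real.log (Real.sin (π * p.2))
        - α * Real.log (Real.sin (π * p.1) + Real.sin (π * p.2))) := by
    intro p hp
    have hu : 0 < Real.sin (π * p.1) := sinpi_pos hp.1
    have hv : 0 < Real.sin (π * p.2) := sinpi_pos hp.2
    have huv : 0 < Real.sin (π * p.1) + Real.sin (π * p.2) := by positivity
    simp only [psiα]
    rw [Real.log_div (by positivity) (by positivity), Real.log_mul (by positivity)
      (by positivity), Real.log_mul hu.ne' hv.ne', Real.log_rpow two_pos,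
      Real.log_rpow huv]
    ring
  have first : ConcaveOn ℝ S (fun p => Real.log (psiα α p)) := by
    have hc : ConcaveOn ℝ S (fun p : ℝ × ℝ => α * Real.log 2 +
        (Real.log (Real.sin (π * p.1)) + Real.log (Real.sin (π * p.2))
          - α * Real.log (Real.sin (π * p.1) + Real.sin (π * p.2)))) :=
      (concaveOn_const _ hSconv).add main
    refine ⟨hSconv, fun p hp q hq a b ha hb hab => ?_⟩
    simp only
    rw [heq _ hp, heq _ hq, heq _ (hSconv hp hq ha hb hab)]
    exact hc.2 hp hq ha hb hab
  refine ⟨first, main, fun c => ?_⟩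
  rcases le_or_gt c 0 with hc | hc
  · have hset : {p ∈ S | c ≤ psiα α p} = S := by
      ext p
      simp only [mem_setOf_eq, and_iff_left_iff_imp]
      intro hp
      have hu : 0 < Real.sin (π * p.1) := sinpi_pos hp.1
      have hv : 0 < Real.sin (π * p.2) := sinpi_pos hp.2
      have : 0 < psiα α p := by
        simp only [psiα]; positivity
      linarith
    rw [hset]; exact hSconv
  · have hset : {p ∈ S | c ≤ psiα α p} = {p ∈ S | Real.log c ≤ Real.log (psiα α p)} := by
      ext p
      simp only [mem_setOf_eq, and_congr_right_iff]
      intro hp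
      have hu : 0 < Real.sin (π * p.1) := sinpi_pos hp.1
      have hv : 0 < Real.sin (π * p.2) := sinpi_pos hp.2
      have hψ : 0 < psiα α p := by simp only [psiα]; positivity
      rw [Real.log_le_log_iff hc hψ]
    rw [hset]
    exact first.convex_ge _
end
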